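/- Conjugate function of the aggregation function in the Eisenberg–Noe model with central clearing: for every z ∈ ℝ^{d+1}_+, sup_{x ∈ ℝ^{d+1}} ( Λ̃(x) − zᵀx ) = Σ_{i=1}^d [ ℓ_{i0}(1 − z_i) + ℓ_{i(d+1)}(z_{d+1} − z_i) ]⁺ + ( Σ_{i=1}^d ℓ_{(d+1)i}( z_i − z_{d+1} ) )⁺, where r⁺ := max{r,0}. -/

import Mathlib

/-!
For `z ≥ 0` and a feasible payment vector `(p, pC)`, the penalty `zᵀx` is smallest at the
tight state `xᵢ = pᵢ - (ℓ_{(d+1)i} / ∑ⱼ ℓ_{(d+1)j}) pC`,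
`x_{d+1} = pC - ∑ᵢ (ℓ_{i(d+1)} / (ℓ_{i(d+1)} + ℓ_{i0})) pᵢ`, for which `(p, pC)` is still
feasible. There the objective minus `zᵀx` is a linear function of `(p, pC)` on the box
`∏ᵢ [0, ℓ_{i(d+1)} + ℓ_{i0}] × [0, ∑ᵢ ℓ_{(d+1)i}]`; its maximum sits at a vertex and equals the
sum of positive parts on the right-hand side.
-/

open scoped ENNReal

noncomputable section

namespace EisenbergNoeCCP

/-- Net interbank liability `∑_{j=1}^d ℓ_{ij} − ∑_{j=1}^d ℓ_{ji}` of institution `i`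
(institutions are the nodes `1,…,d`, encoded as `i.succ` for `i : Fin d`; node `0` is
society). -/
def net {d : ℕ} (ℓ : Fin (d + 1) → Fin (d + 1) → ℝ) (i : Fin d) : ℝ :=
  ∑ j : Fin d, ℓ i.succ j.succ - ∑ j : Fin d, ℓ j.succ i.succ

/-- Liability `ℓ_{i(d+1)} = (∑ⱼ ℓ_{ij} − ∑ⱼ ℓ_{ji})⁺` of institution `i` to the CCP. -/
def toCCP {d : ℕ} (ℓ : Fin (d + 1) → Fin (d + 1) → ℝ) (i : Fin d) : ℝ :=
  max (net ℓ i) 0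

/-- Liability `ℓ_{(d+1)i} = (∑ⱼ ℓ_{ij} − ∑ⱼ ℓ_{ji})⁻` of the CCP to institution `i`. -/
def fromCCP {d : ℕ} (ℓ : Fin (d + 1) → Fin (d + 1) → ℝ) (i : Fin d) : ℝ :=
  max (-net ℓ i) 0

/-- Feasibility for the linear program `P̃(x)` of the Eisenberg–Noe model with central
clearing; the state is `(x, xC) ∈ ℝ^{d+1}` and the payment vector is `(p, pC)`,
where the last coordinate belongs to the CCP (node `d+1`). -/
def Feasible {d : ℕ} (ℓ : Fin (d + 1) → Fin (d + 1) → ℝ) (x : Fin d → ℝ) (xC : ℝ)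
    (p : Fin d → ℝ) (pC : ℝ) : Prop :=
  (∀ i, p i ≤ x i + (fromCCP ℓ i / ∑ j, fromCCP ℓ j) * pC) ∧
    pC ≤ xC + ∑ i, (toCCP ℓ i / (toCCP ℓ i + ℓ i.succ 0)) * p i ∧
    (∀ i, 0 ≤ p i ∧ p i ≤ toCCP ℓ i + ℓ i.succ 0) ∧
    0 ≤ pC ∧ pC ≤ ∑ i, fromCCP ℓ i

/-- The objective `∑_{i=1}^d (ℓ_{i0}/(ℓ_{i0} + ℓ_{i(d+1)})) pᵢ` of `P̃(x)`. -/
def obj {d : ℕ} (ℓ : Fin (d + 1) → Fin (d + 1) → ℝ) (p : Fin d → ℝ) : ℝ :=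
  ∑ i, (ℓ i.succ 0 / (ℓ i.succ 0 + toCCP ℓ i)) * p i

/-- The clearing fixed-point equations of the Eisenberg–Noe model with central
clearing. -/
def Clearing {d : ℕ} (ℓ : Fin (d + 1) → Fin (d + 1) → ℝ) (x : Fin d → ℝ) (xC : ℝ)
    (p : Fin d → ℝ) (pC : ℝ) : Prop :=
  (∀ i, p i = min (toCCP ℓ i + ℓ i.succ 0)
      (x i + pC * (fromCCP ℓ i / ∑ j, fromCCP ℓ j))) ∧
    pC = min (∑ i, fromCCP ℓ i)
      (xC + ∑ i, p i * (toCCP ℓ i / (toCCP ℓ i + ℓ i.succ 0)))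

/-- The aggregation function `Λ̃(x)` of the Eisenberg–Noe model with central
clearing: the optimal value of `P̃(x)` (equal to `−∞ = ⊥` if `P̃(x)` is infeasible). -/
def aggCCP {d : ℕ} (ℓ : Fin (d + 1) → Fin (d + 1) → ℝ) (x : Fin d → ℝ) (xC : ℝ) :
    EReal :=
  ⨆ (p : Fin d → ℝ) (pC : ℝ) (_ : Feasible ℓ x xC p pC), ((obj ℓ p : ℝ) : EReal)

lemma mul_le_max_mul_zero {t T s : ℝ} (ht : 0 ≤ t) (htT : t ≤ T) : t * s ≤ max (T * s) 0 := by
  rcases le_or_gt 0 s with hs | hs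
  · exact le_max_of_le_left (mul_le_mul_of_nonneg_right htT hs)
  · exact le_max_of_le_right (mul_nonpos_of_nonneg_of_nonpos ht hs.le)

lemma exists_mem_Icc_mul_eq_max {T : ℝ} (hT : 0 ≤ T) (s : ℝ) :
    ∃ t ∈ Set.Icc 0 T, t * s = max (T * s) 0 := by
  rcases le_or_gt 0 s with hs | hs
  · exact ⟨T, ⟨hT, le_rfl⟩, (max_eq_left (mul_nonneg hT hs)).symm⟩
  · refine ⟨0, ⟨le_rfl, hT⟩, ?_⟩
    rw [zero_mul, max_eq_right (mul_nonpos_of_nonneg_of_nonpos hT hs.le)]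

section Conjugate

variable {d : ℕ} (ℓ : Fin (d + 1) → Fin (d + 1) → ℝ) (z : Fin d → ℝ) (zC : ℝ)

def socWeight (i : Fin d) : ℝ :=
  ℓ i.succ 0 / (ℓ i.succ 0 + toCCP ℓ i)

def ccpWeight (i : Fin d) : ℝ :=
  toCCP ℓ i / (toCCP ℓ i + ℓ i.succ 0)

def creditorWeight (i : Fin d) : ℝ :=
  fromCCP ℓ i / ∑ j, fromCCP ℓ j

/-- The coefficient of `p i` in `obj ℓ p - (z ⬝ x + zC * xC)` at the tight state
`x i = p i - creditorWeight ℓ i * pC`, `xC = pC - ∑ i, ccpWeight ℓ i * p i`. -/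
def gain (i : Fin d) : ℝ :=
  socWeight ℓ i - z i + zC * ccpWeight ℓ i

/-- The coefficient of `pC` in the same expression. -/
def ccpGain : ℝ :=
  ∑ i, z i * creditorWeight ℓ i - zC

def conjugateValue : ℝ :=
  ∑ i, max (ℓ i.succ 0 * (1 - z i) + toCCP ℓ i * (zC - z i)) 0 +
    max (∑ i, fromCCP ℓ i * (z i - zC)) 0

lemma toCCP_nonneg (i : Fin d) : 0 ≤ toCCP ℓ i := le_max_right _ _

variable {ℓ}

lemma capacity_pos (hto0 : ∀ i : Fin d, 0 < ℓ i.succ 0) (i : Fin d) :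
    0 < toCCP ℓ i + ℓ i.succ 0 :=
  add_pos_of_nonneg_of_pos (toCCP_nonneg ℓ i) (hto0 i)

lemma capacity_mul_gain (hto0 : ∀ i : Fin d, 0 < ℓ i.succ 0) (i : Fin d) :
    (toCCP ℓ i + ℓ i.succ 0) * gain ℓ z zC i =
      ℓ i.succ 0 * (1 - z i) + toCCP ℓ i * (zC - z i) := by
  have h := (capacity_pos hto0 i).ne'
  have h' : ℓ i.succ 0 + toCCP ℓ i ≠ 0 := by rwa [add_comm]
  simp only [gain, socWeight, ccpWeight]
  field_simp
  ring

lemma sum_fromCCP_mul_ccpGain (hCCP : 0 < ∑ j, fromCCP ℓ j) :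
    (∑ j, fromCCP ℓ j) * ccpGain ℓ z zC = ∑ i, fromCCP ℓ i * (z i - zC) := by
  simp only [ccpGain, creditorWeight, mul_sub, Finset.mul_sum, Finset.sum_sub_distrib,
    ← Finset.sum_mul]
  congr 1
  refine Finset.sum_congr rfl fun i _ => ?_
  field_simp

lemma obj_sub_tight (p : Fin d → ℝ) (pC : ℝ) :
    obj ℓ p - (∑ i, z i * (p i - creditorWeight ℓ i * pC) +
        zC * (pC - ∑ i, ccpWeight ℓ i * p i)) =
      ∑ i, p i * gain ℓ z zC i + pC * ccpGain ℓ z zC := by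
  calc _ = ∑ i, (socWeight ℓ i * p i - z i * (p i - creditorWeight ℓ i * pC) +
          zC * (ccpWeight ℓ i * p i)) - zC * pC := by
        rw [Finset.sum_add_distrib, Finset.sum_sub_distrib, ← Finset.mul_sum]
        simp only [obj, socWeight]
        ring
    _ = ∑ i, (p i * gain ℓ z zC i + pC * (z i * creditorWeight ℓ i)) - pC * zC := by
        rw [mul_comm zC pC]
        congr 1
        exact Finset.sum_congr rfl fun i _ => by simp only [gain]; ring
    _ = _ := by
        rw [Finset.sum_add_distrib, ← Finset.mul_sum, ccpGain]
        ring

lemma linear_le_conjugateValue (hto0 : ∀ i : Fin d, 0 < ℓ i.succ 0)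
    (hCCP : 0 < ∑ j, fromCCP ℓ j) {p : Fin d → ℝ} {pC : ℝ}
    (hp : ∀ i, 0 ≤ p i ∧ p i ≤ toCCP ℓ i + ℓ i.succ 0)
    (hpC₀ : 0 ≤ pC) (hpC : pC ≤ ∑ j, fromCCP ℓ j) :
    ∑ i, p i * gain ℓ z zC i + pC * ccpGain ℓ z zC ≤ conjugateValue ℓ z zC := by
  refine add_le_add (Finset.sum_le_sum fun i _ => ?_) ?_
  · rw [← capacity_mul_gain z zC hto0]
    exact mul_le_max_mul_zero (hp i).1 (hp i).2
  · rw [← sum_fromCCP_mul_ccpGain z zC hCCP]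
    exact mul_le_max_mul_zero hpC₀ hpC

lemma exists_linear_eq_conjugateValue (hto0 : ∀ i : Fin d, 0 < ℓ i.succ 0)
    (hCCP : 0 < ∑ j, fromCCP ℓ j) :
    ∃ (p : Fin d → ℝ) (pC : ℝ), (∀ i, 0 ≤ p i ∧ p i ≤ toCCP ℓ i + ℓ i.succ 0) ∧
      0 ≤ pC ∧ pC ≤ ∑ j, fromCCP ℓ j ∧
      ∑ i, p i * gain ℓ z zC i + pC * ccpGain ℓ z zC = conjugateValue ℓ z zC := by
  choose p hp hp_eq using fun i =>
    exists_mem_Icc_mul_eq_max (capacity_pos hto0 i).le (gain ℓ z zC i)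
  obtain ⟨pC, hpC, hpC_eq⟩ := exists_mem_Icc_mul_eq_max hCCP.le (ccpGain ℓ z zC)
  refine ⟨p, pC, hp, hpC.1, hpC.2, ?_⟩
  simp only [hp_eq, hpC_eq, capacity_mul_gain z zC hto0, sum_fromCCP_mul_ccpGain z zC hCCP,
    conjugateValue]

lemma feasible_tight {p : Fin d → ℝ} {pC : ℝ}
    (hp : ∀ i, 0 ≤ p i ∧ p i ≤ toCCP ℓ i + ℓ i.succ 0)
    (hpC₀ : 0 ≤ pC) (hpC : pC ≤ ∑ j, fromCCP ℓ j) :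
    Feasible ℓ (fun i => p i - creditorWeight ℓ i * pC)
      (pC - ∑ i, ccpWeight ℓ i * p i) p pC :=
  ⟨fun _ => (sub_add_cancel _ _).ge, (sub_add_cancel _ _).ge, hp, hpC₀, hpC⟩

lemma obj_sub_le_conjugateValue (hto0 : ∀ i : Fin d, 0 < ℓ i.succ 0)
    (hCCP : 0 < ∑ j, fromCCP ℓ j) (hz : ∀ i, 0 ≤ z i) (hzC : 0 ≤ zC)
    {x : Fin d → ℝ} {xC : ℝ} {p : Fin d → ℝ} {pC : ℝ} (h : Feasible ℓ x xC p pC) :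
    obj ℓ p - (∑ i, z i * x i + zC * xC) ≤ conjugateValue ℓ z zC := by
  obtain ⟨hx, hxC, hp, hpC₀, hpC⟩ := h
  have hzx : ∑ i, z i * (p i - creditorWeight ℓ i * pC) ≤ ∑ i, z i * x i :=
    Finset.sum_le_sum fun i _ =>
      mul_le_mul_of_nonneg_left (sub_le_iff_le_add.2 (hx i)) (hz i)
  have hzxC : zC * (pC - ∑ i, ccpWeight ℓ i * p i) ≤ zC * xC :=
    mul_le_mul_of_nonneg_left (sub_le_iff_le_add.2 hxC) hzC
  calc obj ℓ p - (∑ i, z i * x i + zC * xC)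
      ≤ obj ℓ p - (∑ i, z i * (p i - creditorWeight ℓ i * pC) +
          zC * (pC - ∑ i, ccpWeight ℓ i * p i)) := by linarith
    _ = ∑ i, p i * gain ℓ z zC i + pC * ccpGain ℓ z zC := obj_sub_tight z zC p pC
    _ ≤ conjugateValue ℓ z zC := linear_le_conjugateValue z zC hto0 hCCP hp hpC₀ hpC

lemma exists_feasible_obj_sub_eq_conjugateValue (hto0 : ∀ i : Fin d, 0 < ℓ i.succ 0)
    (hCCP : 0 < ∑ j, fromCCP ℓ j) :
    ∃ x xC p pC, Feasible ℓ x xC p pC ∧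
      obj ℓ p - (∑ i, z i * x i + zC * xC) = conjugateValue ℓ z zC := by
  obtain ⟨p, pC, hp, hpC₀, hpC, hval⟩ := exists_linear_eq_conjugateValue z zC hto0 hCCP
  exact ⟨_, _, p, pC, feasible_tight hp hpC₀ hpC, (obj_sub_tight z zC p pC).trans hval⟩

end Conjugate

theorem ccp_conjugate_general
    (d : ℕ) (ℓ : Fin (d + 1) → Fin (d + 1) → ℝ)
    (hto0 : ∀ i : Fin d, 0 < ℓ i.succ 0)
    (hCCP : 0 < ∑ j, fromCCP ℓ j)
    (z : Fin d → ℝ) (zC : ℝ) (hz : ∀ i, 0 ≤ z i) (hzC : 0 ≤ zC) :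
    (⨆ (x : Fin d → ℝ) (xC : ℝ),
        (aggCCP ℓ x xC - ((∑ i, z i * x i + zC * xC : ℝ) : EReal))) =
      ((∑ i, max (ℓ i.succ 0 * (1 - z i) + toCCP ℓ i * (zC - z i)) 0 +
          max (∑ i, fromCCP ℓ i * (z i - zC)) 0 : ℝ) : EReal) := by
  change _ = ((conjugateValue ℓ z zC : ℝ) : EReal)
  refine le_antisymm (iSup₂_le fun x xC => ?_) ?_
  · rw [EReal.sub_le_iff_le_add (.inl (EReal.coe_ne_bot _)) (.inl (EReal.coe_ne_top _)),
      ← EReal.coe_add, aggCCP]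
    refine iSup₂_le fun p pC => iSup_le fun h => EReal.coe_le_coe_iff.2 ?_
    linarith [obj_sub_le_conjugateValue z zC hto0 hCCP hz hzC h]
  · obtain ⟨x, xC, p, pC, h, hval⟩ := exists_feasible_obj_sub_eq_conjugateValue z zC hto0 hCCP
    refine le_iSup₂_of_le x xC ?_
    rw [← hval, EReal.coe_sub]
    exact EReal.sub_le_sub (le_iSup₂_of_le p pC (le_iSup_of_le h le_rfl)) le_rfl

/-- Conjugate function of the aggregation function in the
Eisenberg–Noe model with central clearing. -/
theorem ccp_conjugate
    (d : ℕ) (hd : 1 ≤ d) (ℓ : Fin (d + 1) → Fin (d + 1) → ℝ)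
    (hℓnn : ∀ i j, 0 ≤ ℓ i j)
    (hsoc : ∀ i : Fin d, ℓ 0 i.succ = 0)
    (hto0 : ∀ i : Fin d, 0 < ℓ i.succ 0)
    (hself : ∀ i, ℓ i i = 0)
    (hCCP : 0 < ∑ j, fromCCP ℓ j)
    (z : Fin d → ℝ) (zC : ℝ) (hz : ∀ i, 0 ≤ z i) (hzC : 0 ≤ zC) :
    (⨆ (x : Fin d → ℝ) (xC : ℝ),
        (aggCCP ℓ x xC - ((∑ i, z i * x i + zC * xC : ℝ) : EReal))) =
      ((∑ i, max (ℓ i.succ 0 * (1 - z i) + toCCP ℓ i * (zC - z i)) 0 +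
          max (∑ i, fromCCP ℓ i * (z i - zC)) 0 : ℝ) : EReal) :=
  ccp_conjugate_general d ℓ hto0 hCCP z zC hz hzC

end EisenbergNoeCCP
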